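/- Let G=(V,E) be a graph, T ⊆ V of even cardinality, and t̂ ∈ T a fixed node. Let x* : E → ℝ satisfy x* ≥ 0, x*(δ(S)) ≥ 2 for every T-even set S with ∅ ⊊ S ⊊ V, and the partition inequality x*(δ(P₁,…,P_k)) ≥ k−1 for every partition of V into nonempty sets P₁,…,P_k. Let 0 ≤ τ ≤ 1/2 and let 𝓛 be the family of all T-odd τ-narrow subsets of V∖{t̂}. Then there exist vectors f^U : E → ℝ, one for each U ∈ 𝓛, such that: (1) f^U ≥ 0 for each U ∈ 𝓛; (2) ∑_{U∈𝓛} f^U ≤ x* componentwise; and (3) f^U(δ(U)) ≥ 1 for each U ∈ 𝓛. -/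

import Mathlib

open Finset
open scoped Classical

variable {V : Type*}

/-- `x(δ(U))`: the total `x`-value of the edges of `G` with exactly one endpoint in `U`. -/
noncomputable def xCut [Fintype V] [DecidableEq V] (G : SimpleGraph V)
    (x : Sym2 V → ℝ) (U : Finset V) : ℝ :=
  ∑ u ∈ U, ∑ w ∈ Uᶜ, if G.Adj u w then x s(u, w) else 0

/-!
The `T`-odd `τ`-narrow sets avoiding `t̂` form a laminar family: two crossing ones could be
uncrossed into two `T`-even sets (`U ∩ W` and `U ∪ W`, or `U \ W` and `W \ U`, according to the
parity of `|U ∩ W ∩ T|`), whose cuts weigh at least `2` each, while by sub- or posimodularity of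
the cut function they weigh together less than `2 (1 + τ) ≤ 3`.

For a laminar subfamily `𝒦`, the regions `U \ ⋃ {C ∈ 𝒦 | C ⊊ U}` together with `V \ ⋃ 𝒦`
partition `V` into `|𝒦| + 1` parts. No region is empty: otherwise `U` would be the disjoint union
of its maximal proper sub-members, an odd number `≥ 3` of sets whose cuts, like that of `U`,
weigh less than `3/2`, against the partition inequality. Every cut edge of a part crosses some
member of `𝒦` and at most two parts, so the partition inequality yields Hall's condition
`|𝒦| ≤ x*(⋃_{U ∈ 𝒦} δ(U))`.

The vectors `f^U` are then a fractional assignment of the members of `𝓛` to their cut edges,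
which exists by the fractional Hall theorem. To prove it, take among the assignments of maximum
total value one with the most deficient members `𝒦`: the edges of `⋃_{U ∈ 𝒦} δ(U)` are
saturated, and only by members of `𝒦`, so Hall's condition fails for `𝒦` unless `𝒦 = ∅`.
-/

section FractionalHall

variable {α β : Type*}

structure IsFracAssignment (L : Finset α) (D : α → Finset β) (x : β → ℝ) (g : α → β → ℝ) :
    Prop where
  nonneg : ∀ U e, 0 ≤ g U e
  eq_zero : ∀ U e, ¬(U ∈ L ∧ e ∈ D U) → g U e = 0
  load_le : ∀ e, ∑ U ∈ L, g U e ≤ x e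
  sum_le_one : ∀ U ∈ L, ∑ e ∈ D U, g U e ≤ 1

noncomputable def bump (U : α) (e : β) (ε : ℝ) : α → β → ℝ :=
  fun U' e' => if U' = U ∧ e' = e then ε else 0

lemma sum_bump_left (s : Finset α) (U : α) (e e' : β) (ε : ℝ) :
    ∑ U' ∈ s, bump U e ε U' e' = if U ∈ s ∧ e' = e then ε else 0 := by
  by_cases he : e' = e <;> simp [bump, he]

lemma sum_bump_right (D : α → Finset β) {U : α} {e : β} (he : e ∈ D U) (U' : α) (ε : ℝ) :
    ∑ e' ∈ D U', bump U e ε U' e' = if U' = U then ε else 0 := by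
  by_cases hU : U' = U <;> simp [bump, hU, he]

variable {L : Finset α} {D : α → Finset β} {x : β → ℝ} {g : α → β → ℝ}

namespace IsFracAssignment

lemma isCompact : IsCompact {g | IsFracAssignment L D x g} := by
  have hbdd : {g | IsFracAssignment L D x g} ⊆
      Set.univ.pi fun _ => Set.univ.pi fun _ => Set.Icc 0 1 := by
    intro g hg U _ e _
    refine ⟨hg.nonneg U e, ?_⟩
    by_cases hUe : U ∈ L ∧ e ∈ D U
    · exact (single_le_sum (fun e _ => hg.nonneg U e) hUe.2).trans (hg.sum_le_one U hUe.1)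
    · simp [hg.eq_zero U e hUe]
  have hclosed : IsClosed {g | IsFracAssignment L D x g} := by
    have : {g | IsFracAssignment L D x g} = {g : α → β → ℝ | (∀ U e, 0 ≤ g U e) ∧
        (∀ U e, ¬(U ∈ L ∧ e ∈ D U) → g U e = 0) ∧ (∀ e, ∑ U ∈ L, g U e ≤ x e) ∧
        ∀ U ∈ L, ∑ e ∈ D U, g U e ≤ 1} :=
      Set.ext fun g => ⟨fun ⟨a, b, c, d⟩ => ⟨a, b, c, d⟩, fun ⟨a, b, c, d⟩ => ⟨a, b, c, d⟩⟩
    rw [this]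
    simp only [Set.ofPred_and, Set.ofPred_forall]
    refine .inter ?_ (.inter ?_ (.inter ?_ ?_)) <;>
    refine isClosed_iInter fun _ => ?_
    · exact isClosed_iInter fun _ => isClosed_le (by fun_prop) (by fun_prop)
    · exact isClosed_iInter fun _ => isClosed_iInter fun _ =>
        isClosed_eq (by fun_prop) (by fun_prop)
    · exact isClosed_le (by fun_prop) (by fun_prop)
    · exact isClosed_iInter fun _ => isClosed_le (by fun_prop) (by fun_prop)
  exact (isCompact_univ_pi fun _ => isCompact_univ_pi fun _ => isCompact_Icc).of_isClosed_subset
    hclosed hbdd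

lemma add_bump (hg : IsFracAssignment L D x g) {U : α} {e : β} {ε : ℝ} (hU : U ∈ L)
    (he : e ∈ D U) (hε : 0 ≤ ε) (hload : ∑ U' ∈ L, g U' e + ε ≤ x e)
    (hsum : ∑ e' ∈ D U, g U e' + ε ≤ 1) :
    IsFracAssignment L D x (g + bump U e ε) where
  nonneg U' e' := add_nonneg (hg.nonneg U' e') (by unfold bump; split_ifs <;> simp [hε])
  eq_zero U' e' h := by
    have : ¬(U' = U ∧ e' = e) := by rintro ⟨rfl, rfl⟩; exact h ⟨hU, he⟩
    simp [bump, this, hg.eq_zero U' e' h]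
  load_le e' := by
    simp only [Pi.add_apply, sum_add_distrib, sum_bump_left, hU, true_and]
    split_ifs with h
    · exact h ▸ hload
    · simpa using hg.load_le e'
  sum_le_one U' hU' := by
    simp only [Pi.add_apply, sum_add_distrib, sum_bump_right D he]
    split_ifs with h
    · exact h ▸ hsum
    · simpa using hg.sum_le_one U' hU'

lemma transfer (hg : IsFracAssignment L D x g) {U W : α} {e : β} {ε : ℝ} (hU : U ∈ L)
    (hW : W ∈ L) (heU : e ∈ D U) (heW : e ∈ D W) (hε : 0 ≤ ε) (hεg : ε ≤ g U e)
    (hsum : ∑ e' ∈ D W, g W e' + ε ≤ 1) :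
    IsFracAssignment L D x (g + bump W e ε - bump U e ε) where
  nonneg U' e' := by
    have := hg.nonneg U' e'
    simp only [bump, Pi.sub_apply, Pi.add_apply]
    split_ifs with h1 h2 h2 <;> (try obtain ⟨rfl, rfl⟩ := h2) <;> linarith
  eq_zero U' e' h := by
    have hW' : ¬(U' = W ∧ e' = e) := by rintro ⟨rfl, rfl⟩; exact h ⟨hW, heW⟩
    have hU' : ¬(U' = U ∧ e' = e) := by rintro ⟨rfl, rfl⟩; exact h ⟨hU, heU⟩
    simp [bump, hW', hU', hg.eq_zero U' e' h]
  load_le e' := by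
    simpa only [Pi.sub_apply, Pi.add_apply, sum_sub_distrib, sum_add_distrib, sum_bump_left,
      hU, hW, true_and, add_sub_cancel_right] using hg.load_le e'
  sum_le_one U' hU' := by
    have := hg.sum_le_one U' hU'
    simp only [Pi.sub_apply, Pi.add_apply, sum_sub_distrib, sum_add_distrib,
      sum_bump_right D heU, sum_bump_right D heW]
    split_ifs with h1 h2 h2 <;> (try subst h1) <;> linarith

end IsFracAssignment

variable (L D) in
def totalValue (g : α → β → ℝ) : ℝ := ∑ U ∈ L, ∑ e ∈ D U, g U e

variable (L D) in
noncomputable def deficient (g : α → β → ℝ) : Finset α := {U ∈ L | ∑ e ∈ D U, g U e < 1}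

lemma totalValue_add_bump {U : α} {e : β} (hU : U ∈ L) (he : e ∈ D U) (ε : ℝ) :
    totalValue L D (g + bump U e ε) = totalValue L D g + ε := by
  simp [totalValue, sum_add_distrib, sum_bump_right D he, hU]

lemma totalValue_transfer {U W : α} {e : β} (hU : U ∈ L) (hW : W ∈ L) (heU : e ∈ D U)
    (heW : e ∈ D W) (ε : ℝ) :
    totalValue L D (g + bump W e ε - bump U e ε) = totalValue L D g := by
  simp [totalValue, sum_add_distrib, sum_sub_distrib, sum_bump_right D heU,
    sum_bump_right D heW, hU, hW]

lemma IsFracAssignment.load_eq_of_mem_deficient (hg : IsFracAssignment L D x g)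
    (hmax : ∀ h, IsFracAssignment L D x h → totalValue L D h ≤ totalValue L D g)
    {U : α} (hU : U ∈ deficient L D g) {e : β} (he : e ∈ D U) :
    ∑ U' ∈ L, g U' e = x e := by
  obtain ⟨hUL, hUlt⟩ := mem_filter.1 hU
  refine (hg.load_le e).antisymm (not_lt.1 fun hlt => ?_)
  obtain ⟨ε, hε, hεload, hεsum⟩ : ∃ ε > 0, ε ≤ x e - ∑ U' ∈ L, g U' e ∧
      ε ≤ 1 - ∑ e' ∈ D U, g U e' :=
    ⟨_, lt_min (by linarith) (by linarith), min_le_left _ _, min_le_right _ _⟩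
  have := hmax _ (hg.add_bump hUL he hε.le (by linarith) (by linarith))
  rw [totalValue_add_bump hUL he] at this
  linarith

/-- Otherwise part of `g U e` could be handed over to `W`, making `U` deficient as well. -/
lemma IsFracAssignment.eq_zero_of_mem_deficient (hg : IsFracAssignment L D x g)
    (hmost : ∀ h, IsFracAssignment L D x h → totalValue L D h = totalValue L D g →
      #(deficient L D h) ≤ #(deficient L D g))
    {U W : α} (hU : U ∈ L) (hUdef : U ∉ deficient L D g) (hW : W ∈ deficient L D g)
    {e : β} (heW : e ∈ D W) : g U e = 0 := by
  by_contra hne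
  obtain ⟨hWL, hWlt⟩ := mem_filter.1 hW
  have hpos : 0 < g U e := (hg.nonneg U e).lt_of_ne' hne
  have heU : e ∈ D U := (not_not.1 (mt (hg.eq_zero U e) hne)).2
  have hUW : U ≠ W := by rintro rfl; exact hUdef hW
  obtain ⟨ε, hε, hεg, hεW⟩ : ∃ ε > 0, ε ≤ g U e ∧ ε ≤ (1 - ∑ e' ∈ D W, g W e') / 2 :=
    ⟨_, lt_min hpos (by linarith), min_le_left _ _, min_le_right _ _⟩
  have hg' := hg.transfer hU hWL heU heW hε.le hεg (by linarith)
  have hsum : ∀ V, ∑ e' ∈ D V, (g + bump W e ε - bump U e ε) V e' =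
      ∑ e' ∈ D V, g V e' + (if V = W then ε else 0) - (if V = U then ε else 0) := fun V => by
    simp only [Pi.sub_apply, Pi.add_apply, sum_sub_distrib, sum_add_distrib,
      sum_bump_right D heU, sum_bump_right D heW]
  have hsub : insert U (deficient L D g) ⊆ deficient L D (g + bump W e ε - bump U e ε) := by
    intro V hV
    refine mem_filter.2 ⟨?_, ?_⟩
    · rcases mem_insert.1 hV with rfl | hV
      exacts [hU, (mem_filter.1 hV).1]
    rw [hsum]
    rcases mem_insert.1 hV with rfl | hV
    · have := hg.sum_le_one V hU
      simp only [hUW, if_false, if_true]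
      linarith
    · have := (mem_filter.1 hV).2
      split_ifs with h1 h2 <;> (try subst h1) <;> linarith
  have := (card_le_card hsub).trans (hmost _ hg' (totalValue_transfer hU hWL heU heW ε))
  rw [card_insert_of_notMem hUdef] at this
  omega

lemma exists_isFracAssignment_maximal (hx : ∀ e, 0 ≤ x e) :
    ∃ g, IsFracAssignment L D x g ∧
      (∀ h, IsFracAssignment L D x h → totalValue L D h ≤ totalValue L D g) ∧
      ∀ h, IsFracAssignment L D x h → totalValue L D h = totalValue L D g →
        #(deficient L D h) ≤ #(deficient L D g) := by
  have hzero : IsFracAssignment L D x 0 :=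
    ⟨fun _ _ => le_rfl, fun _ _ _ => rfl, fun e => by simpa using hx e, fun _ _ => by simp⟩
  obtain ⟨f, hf, hfmax⟩ := IsFracAssignment.isCompact.exists_isMaxOn ⟨0, hzero⟩
    (show Continuous (totalValue L D) by unfold totalValue; fun_prop).continuousOn
  set M := {h | IsFracAssignment L D x h ∧ totalValue L D h = totalValue L D f}
  have hfin : ((fun h => #(deficient L D h)) '' M).Finite :=
    (Set.finite_Iic #L).subset <| Set.image_subset_iff.2 fun h _ => card_filter_le _ _
  obtain ⟨_, ⟨g, ⟨hg, hgf⟩, rfl⟩, hgmost⟩ :=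
    Set.exists_max_image _ id hfin ⟨_, f, ⟨hf, rfl⟩, rfl⟩
  refine ⟨g, hg, fun h hh => hgf ▸ hfmax hh, fun h hh hhg => ?_⟩
  exact hgmost _ ⟨h, ⟨hh, hhg.trans hgf⟩, rfl⟩

theorem exists_fracAssignment [DecidableEq β] (hx : ∀ e, 0 ≤ x e)
    (hall : ∀ K ⊆ L, (#K : ℝ) ≤ ∑ e ∈ K.biUnion D, x e) :
    ∃ f, IsFracAssignment L D x f ∧ ∀ U ∈ L, 1 ≤ ∑ e ∈ D U, f U e := by
  obtain ⟨g, hg, hmax, hmost⟩ := exists_isFracAssignment_maximal hx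
  refine ⟨g, hg, fun U hU => not_lt.1 fun hlt => ?_⟩
  set K := deficient L D g
  have hUK : U ∈ K := mem_filter.2 ⟨hU, hlt⟩
  have hKL : K ⊆ L := filter_subset _ _
  have hvanish : ∀ V ∈ L, ∀ e ∈ K.biUnion D, V ∉ K → g V e = 0 := fun V hV e he hVK => by
    obtain ⟨W, hW, heW⟩ := mem_biUnion.1 he
    exact hg.eq_zero_of_mem_deficient hmost hV hVK hW heW
  have hsupp : ∀ V ∈ K, ∀ e ∈ K.biUnion D, e ∉ D V → g V e = 0 := fun V hV e _ he =>
    hg.eq_zero V e fun h => he h.2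
  refine (hall K hKL).not_gt ?_
  calc
    ∑ e ∈ K.biUnion D, x e = ∑ e ∈ K.biUnion D, ∑ V ∈ L, g V e := by
      refine sum_congr rfl fun e he => ?_
      obtain ⟨W, hW, heW⟩ := mem_biUnion.1 he
      exact (hg.load_eq_of_mem_deficient hmax hW heW).symm
    _ = ∑ V ∈ K, ∑ e ∈ K.biUnion D, g V e := by
      rw [sum_comm, sum_subset hKL fun V hV hVK => sum_eq_zero fun e he => hvanish V hV e he hVK]
    _ = ∑ V ∈ K, ∑ e ∈ D V, g V e :=
      sum_congr rfl fun V hV => (sum_subset (subset_biUnion_of_mem D hV) (hsupp V hV)).symm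
    _ < ∑ V ∈ K, 1 := sum_lt_sum_of_nonempty ⟨U, hUK⟩ fun V hV => (mem_filter.1 hV).2
    _ = #K := by simp

end FractionalHall

theorem card_sdiff_inter_add_card_inter_inter [DecidableEq V] (A B T : Finset V) :
    #((A \ B) ∩ T) + #((A ∩ B) ∩ T) = #(A ∩ T) := by
  rw [show (A \ B) ∩ T = (A ∩ T) \ (B ∩ T) by ext; simp; tauto, inter_inter_distrib_right,
    card_sdiff_add_card_inter]

theorem card_filter_mem_le_one [DecidableEq V] {P : Finset (Finset V)}
    (hP : (P : Set (Finset V)).PairwiseDisjoint id) (v : V) : #{p ∈ P | v ∈ p} ≤ 1 :=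
  card_le_one.2 fun p hp q hq => by
    by_contra hpq
    simp only [mem_filter] at hp hq
    exact disjoint_left.1 (hP hp.1 hq.1 hpq) hp.2 hq.2

section Laminar

variable {K : Finset (Finset V)} {U W : Finset V} {v : V}

def IsLaminar (K : Finset (Finset V)) : Prop :=
  ∀ U ∈ K, ∀ W ∈ K, Disjoint U W ∨ U ⊆ W ∨ W ⊆ U

theorem IsLaminar.subset {K' : Finset (Finset V)} (hK : IsLaminar K) (h : K' ⊆ K) :
    IsLaminar K' :=
  fun U hU W hW => hK U (h hU) W (h hW)

variable [DecidableEq V]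

def region (K : Finset (Finset V)) (U : Finset V) : Finset V :=
  U \ {C ∈ K | C ⊂ U}.biUnion id

theorem mem_region : v ∈ region K U ↔ v ∈ U ∧ ∀ C ∈ K, C ⊂ U → v ∉ C := by
  simp only [region, mem_sdiff, mem_biUnion, mem_filter, id, not_exists, not_and, and_imp]

theorem region_subset : region K U ⊆ U := sdiff_subset

theorem IsLaminar.disjoint_region (hK : IsLaminar K) (hU : U ∈ K) (hW : W ∈ K) (hUW : U ≠ W) :
    Disjoint (region K U) (region K W) := by
  refine disjoint_left.2 fun v hvU hvW => ?_
  rw [mem_region] at hvU hvW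
  rcases hK U hU W hW with h | h | h
  · exact disjoint_left.1 h hvU.1 hvW.1
  · exact hvW.2 U hU (ssubset_of_subset_of_ne h hUW) hvU.1
  · exact hvU.2 W hW (ssubset_of_subset_of_ne h hUW.symm) hvW.1

theorem IsLaminar.exists_partition_of_region_eq_empty (hK : IsLaminar K)
    (h : region K U = ∅) : ∃ M ⊆ K, (∀ m ∈ M, m ⊂ U) ∧
      (M : Set (Finset V)).PairwiseDisjoint id ∧ M.biUnion id = U := by
  set C := {C ∈ K | C ⊂ U}
  refine ⟨{m ∈ C | Maximal (· ∈ C) m}, fun m hm => (mem_filter.1 (mem_filter.1 hm).1).1,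
    fun m hm => (mem_filter.1 (mem_filter.1 hm).1).2, ?_, ?_⟩
  · intro m hm m' hm' hne
    simp only [coe_filter, Set.mem_ofPred_eq] at hm hm'
    rcases hK m (mem_filter.1 hm.1).1 m' (mem_filter.1 hm'.1).1 with h | h | h
    · exact h
    · exact absurd (hm.2.eq_of_le hm'.1 h) hne
    · exact absurd (hm'.2.eq_of_le hm.1 h).symm hne
  · refine (biUnion_subset.2 fun m hm => (mem_filter.1 (mem_filter.1 hm).1).2.subset).antisymm
      fun v hv => ?_
    have : v ∉ region K U := by simp [h]
    simp only [mem_region, hv, true_and, not_forall, not_not] at this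
    obtain ⟨c, hc, hcU, hvc⟩ := this
    obtain ⟨m, hcm, hm⟩ := C.exists_le_maximal (mem_filter.2 ⟨hc, hcU⟩)
    exact mem_biUnion.2 ⟨m, mem_filter.2 ⟨hm.1, hm⟩, hcm hvc⟩

end Laminar

section Cut

variable [Fintype V] [DecidableEq V]

theorem compl_biUnion_notMem {Q : Finset (Finset V)} (h : (Q.biUnion id)ᶜ.Nonempty) :
    (Q.biUnion id)ᶜ ∉ Q := fun hQ => by
  obtain ⟨v, hv⟩ := h
  exact mem_compl.1 hv (mem_biUnion.2 ⟨_, hQ, hv⟩)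

theorem pairwiseDisjoint_insert_compl_biUnion {Q : Finset (Finset V)}
    (hQ : (Q : Set (Finset V)).PairwiseDisjoint id) :
    ((insert (Q.biUnion id)ᶜ Q : Finset (Finset V)) : Set (Finset V)).PairwiseDisjoint id := by
  rw [coe_insert]
  exact hQ.insert fun q hq _ => disjoint_compl_left.mono_right (subset_biUnion_of_mem id hq)

variable (G : SimpleGraph V)

noncomputable def cutEdges (U : Finset V) : Finset (Sym2 V) :=
  {p ∈ U ×ˢ Uᶜ | G.Adj p.1 p.2}.image fun p => s(p.1, p.2)

variable {G}

theorem mk_mem_cutEdges {U : Finset V} {u w : V} :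
    s(u, w) ∈ cutEdges G U ↔ G.Adj u w ∧ ¬(u ∈ U ↔ w ∈ U) := by
  simp only [cutEdges, mem_image, mem_filter, mem_product, mem_compl, Prod.exists,
    Sym2.eq_iff]
  constructor
  · rintro ⟨a, b, ⟨⟨ha, hb⟩, hab⟩, ⟨rfl, rfl⟩ | ⟨rfl, rfl⟩⟩
    exacts [⟨hab, by tauto⟩, ⟨hab.symm, by tauto⟩]
  · rintro ⟨huw, h⟩
    by_cases hu : u ∈ U
    · exact ⟨u, w, ⟨⟨hu, by tauto⟩, huw⟩, Or.inl ⟨rfl, rfl⟩⟩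
    · exact ⟨w, u, ⟨⟨by tauto, hu⟩, huw.symm⟩, Or.inr ⟨rfl, rfl⟩⟩

theorem cutEdges_compl (U : Finset V) : cutEdges G Uᶜ = cutEdges G U := by
  ext e
  induction e using Sym2.ind
  simp only [mk_mem_cutEdges, mem_compl]
  tauto

theorem cutEdges_subset_edgeSet {U : Finset V} {e : Sym2 V} (he : e ∈ cutEdges G U) :
    e ∈ G.edgeSet := by
  induction e using Sym2.ind
  exact (mk_mem_cutEdges.1 he).1

theorem xCut_eq_sum_cutEdges (y : Sym2 V → ℝ) (U : Finset V) :
    xCut G y U = ∑ e ∈ cutEdges G U, y e := by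
  rw [xCut, ← sum_product', ← sum_filter, cutEdges, sum_image]
  rintro ⟨u, w⟩ h ⟨u', w'⟩ h' huw
  simp only [coe_filter, mem_product, mem_compl, Set.mem_ofPred_eq] at h h'
  rcases Sym2.eq_iff.1 huw with ⟨rfl, rfl⟩ | ⟨rfl, rfl⟩
  · rfl
  · exact absurd h'.1.1 h.1.2

theorem xCut_compl (y : Sym2 V → ℝ) (U : Finset V) : xCut G y Uᶜ = xCut G y U := by
  rw [xCut_eq_sum_cutEdges, xCut_eq_sum_cutEdges, cutEdges_compl]

theorem xCut_eq_sum_univ (y : Sym2 V → ℝ) (U : Finset V) :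
    xCut G y U = ∑ u, ∑ w, if u ∈ U ∧ w ∉ U then (if G.Adj u w then y s(u, w) else 0) else 0 := by
  simp only [xCut, ite_and, sum_ite_irrel, sum_const_zero, ← mem_compl, sum_ite_mem, univ_inter]

theorem xCut_inter_add_xCut_union_le {y : Sym2 V → ℝ} (hy : ∀ e ∈ G.edgeSet, 0 ≤ y e)
    (S T : Finset V) : xCut G y (S ∩ T) + xCut G y (S ∪ T) ≤ xCut G y S + xCut G y T := by
  simp only [xCut_eq_sum_univ, ← sum_add_distrib]
  refine sum_le_sum fun u _ => sum_le_sum fun w _ => ?_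
  have : 0 ≤ if G.Adj u w then y s(u, w) else 0 := by
    split_ifs with h
    exacts [hy _ h, le_rfl]
  simp only [mem_inter, mem_union]
  split_ifs <;> simp_all

theorem xCut_sdiff_add_xCut_sdiff_le {y : Sym2 V → ℝ} (hy : ∀ e ∈ G.edgeSet, 0 ≤ y e)
    (S T : Finset V) : xCut G y (S \ T) + xCut G y (T \ S) ≤ xCut G y S + xCut G y T := by
  have h := xCut_inter_add_xCut_union_le hy S Tᶜ
  rwa [← sdiff_eq_inter_compl, ← xCut_compl y (S ∪ Tᶜ), compl_union, compl_compl,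
    inter_comm, ← sdiff_eq_inter_compl, xCut_compl] at h

theorem disjoint_or_subset_or_subset_of_odd {x : Sym2 V → ℝ} (hx : ∀ e ∈ G.edgeSet, 0 ≤ x e)
    {T : Finset V}
    (heven : ∀ S : Finset V, S.Nonempty → S ≠ univ → Even #(S ∩ T) → 2 ≤ xCut G x S)
    {t : V} {U W : Finset V} (htU : t ∉ U) (htW : t ∉ W) (hU : Odd #(U ∩ T))
    (hW : Odd #(W ∩ T)) (hUW : xCut G x U + xCut G x W < 4) :
    Disjoint U W ∨ U ⊆ W ∨ W ⊆ U := by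
  by_contra! h
  obtain ⟨hcross, hUW', hWU'⟩ := h
  have hne : ∀ {S : Finset V}, t ∉ S → S ≠ univ := fun ht hS => ht (hS ▸ mem_univ t)
  have hunion : #((U ∪ W) ∩ T) + #((U ∩ W) ∩ T) = #(U ∩ T) + #(W ∩ T) := by
    rw [union_inter_distrib_right, inter_inter_distrib_right, card_union_add_card_inter]
  have hUdiff := card_sdiff_inter_add_card_inter_inter U W T
  have hWdiff := card_sdiff_inter_add_card_inter_inter W U T
  rw [inter_comm W U] at hWdiff
  rw [Nat.odd_iff] at hU hW
  rcases Nat.even_or_odd #((U ∩ W) ∩ T) with hI | hI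
  · have h1 := heven _ (not_disjoint_iff_nonempty_inter.1 hcross)
      (hne fun h => htU (mem_inter.1 h).1) hI
    have h2 := heven (U ∪ W) ((not_disjoint_iff_nonempty_inter.1 hcross).mono
      inter_subset_union) (hne fun h => (mem_union.1 h).elim htU htW)
      (by rw [Nat.even_iff] at hI ⊢; omega)
    linarith [xCut_inter_add_xCut_union_le hx U W]
  · rw [Nat.odd_iff] at hI
    have h1 := heven _ (sdiff_nonempty.2 hUW') (hne fun h => htU (mem_sdiff.1 h).1)
      (by rw [Nat.even_iff]; omega)
    have h2 := heven _ (sdiff_nonempty.2 hWU') (hne fun h => htW (mem_sdiff.1 h).1)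
      (by rw [Nat.even_iff]; omega)
    linarith [xCut_sdiff_add_xCut_sdiff_le hx U W]

theorem mem_biUnion_cutEdges_of_not_forall_iff {K : Finset (Finset V)} {u w : V}
    (huw : G.Adj u w) (h : ¬∀ C ∈ K, (u ∈ C ↔ w ∈ C)) : s(u, w) ∈ K.biUnion (cutEdges G) := by
  by_contra hN
  exact h fun C hC => not_not.1 fun hsep =>
    hN (mem_biUnion.2 ⟨C, hC, mk_mem_cutEdges.2 ⟨huw, hsep⟩⟩)

theorem cutEdges_biUnion_subset (Q : Finset (Finset V)) :
    cutEdges G (Q.biUnion id) ⊆ Q.biUnion (cutEdges G) := by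
  intro e he
  induction e using Sym2.ind with | _ u w => ?_
  obtain ⟨huw, hsep⟩ := mk_mem_cutEdges.1 he
  refine mem_biUnion_cutEdges_of_not_forall_iff huw fun hsame => hsep ?_
  simp only [mem_biUnion, id]
  exact exists_congr fun C => and_congr_right fun hC => hsame C hC

theorem card_filter_mem_cutEdges_le_two {P : Finset (Finset V)}
    (hP : (P : Set (Finset V)).PairwiseDisjoint id) (e : Sym2 V) :
    #{p ∈ P | e ∈ cutEdges G p} ≤ 2 := by
  induction e using Sym2.ind with | _ u w => ?_
  calc #{p ∈ P | s(u, w) ∈ cutEdges G p} ≤ #({p ∈ P | u ∈ p} ∪ {p ∈ P | w ∈ p}) := by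
        refine card_le_card fun p hp => ?_
        simp only [mem_filter, mem_union, mk_mem_cutEdges] at hp ⊢
        tauto
    _ ≤ 2 := (card_union_le _ _).trans
        (add_le_add (card_filter_mem_le_one hP u) (card_filter_mem_le_one hP w))

theorem sum_xCut_le_two_mul_sum {P : Finset (Finset V)}
    (hP : (P : Set (Finset V)).PairwiseDisjoint id) {N : Finset (Sym2 V)}
    (hPN : ∀ p ∈ P, cutEdges G p ⊆ N) {x : Sym2 V → ℝ} (hx : ∀ e ∈ N, 0 ≤ x e) :
    ∑ p ∈ P, xCut G x p ≤ 2 * ∑ e ∈ N, x e := calc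
  ∑ p ∈ P, xCut G x p = ∑ p ∈ P, ∑ e ∈ N, if e ∈ cutEdges G p then x e else 0 := by
    refine sum_congr rfl fun p hp => ?_
    rw [xCut_eq_sum_cutEdges, sum_ite_mem, inter_eq_right.2 (hPN p hp)]
  _ = ∑ e ∈ N, #{p ∈ P | e ∈ cutEdges G p} * x e := by
    rw [sum_comm]
    simp only [← sum_filter, sum_const, nsmul_eq_mul]
  _ ≤ ∑ e ∈ N, 2 * x e := sum_le_sum fun e he =>
    mul_le_mul_of_nonneg_right (by exact_mod_cast card_filter_mem_cutEdges_le_two hP e) (hx e he)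
  _ = 2 * ∑ e ∈ N, x e := (mul_sum _ _ _).symm

theorem cutEdges_region_subset {K : Finset (Finset V)} {U : Finset V} (hU : U ∈ K) :
    cutEdges G (region K U) ⊆ K.biUnion (cutEdges G) := by
  intro e he
  induction e using Sym2.ind with | _ u w => ?_
  obtain ⟨huw, hsep⟩ := mk_mem_cutEdges.1 he
  refine mem_biUnion_cutEdges_of_not_forall_iff huw fun hsame => hsep ?_
  simp only [mem_region]
  exact and_congr (hsame U hU) (forall₂_congr fun C hC => by rw [hsame C hC])

variable (G) in
/-- The partition inequality `x(δ(P₁, …, P_k)) ≥ k - 1`, written with `∑ᵢ x(δ(Pᵢ)) = 2 x(δ(P))`. -/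
def PartitionIneq (x : Sym2 V → ℝ) : Prop :=
  ∀ P : Finset (Finset V), (∀ p ∈ P, p.Nonempty) →
    (P : Set (Finset V)).PairwiseDisjoint id → P.biUnion id = univ →
    (#P : ℝ) - 1 ≤ (∑ p ∈ P, xCut G x p) / 2

theorem PartitionIneq.card_le {x : Sym2 V → ℝ} (hxP : PartitionIneq G x)
    {Q : Finset (Finset V)} (hQ : ∀ q ∈ Q, q.Nonempty)
    (hdisj : (Q : Set (Finset V)).PairwiseDisjoint id) (hcompl : (Q.biUnion id)ᶜ.Nonempty) :
    (#Q : ℝ) ≤ (xCut G x (Q.biUnion id) + ∑ q ∈ Q, xCut G x q) / 2 := by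
  have hnotMem := compl_biUnion_notMem hcompl
  have := hxP (insert (Q.biUnion id)ᶜ Q)
    (forall_mem_insert _ _ _ |>.2 ⟨hcompl, hQ⟩) (pairwiseDisjoint_insert_compl_biUnion hdisj)
    (by rw [biUnion_insert, id]; exact compl_sup_eq_top)
  rw [card_insert_of_notMem hnotMem, sum_insert hnotMem, xCut_compl] at this
  push_cast at this
  linarith

theorem IsLaminar.region_nonempty {x : Sym2 V → ℝ} (hxP : PartitionIneq G x)
    {T : Finset V} {K : Finset (Finset V)} (hK : IsLaminar K) (hodd : ∀ S ∈ K, Odd #(S ∩ T))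
    (hnarrow : ∀ S ∈ K, xCut G x S < 3 / 2) {U : Finset V} (hU : U ∈ K) (hUuniv : U ≠ univ) :
    (region K U).Nonempty := by
  rw [nonempty_iff_ne_empty]
  intro hempty
  obtain ⟨M, hMK, hMU, hdisj, hcover⟩ := hK.exists_partition_of_region_eq_empty hempty
  have hModd : Odd #M := by
    have hsum : #(U ∩ T) = ∑ m ∈ M, #(m ∩ T) := by
      rw [← hcover, biUnion_inter, card_biUnion (hdisj.mono fun m => inter_subset_left)]
      rfl
    have := hodd U hU
    rwa [hsum, odd_sum_iff_odd_card_odd, filter_true_of_mem fun m hm => hodd m (hMK hm)] at this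
  have hM3 : 3 ≤ #M := by
    have hM1 : #M ≠ 1 := fun h => by
      obtain ⟨m, rfl⟩ := card_eq_one.1 h
      rw [singleton_biUnion, id] at hcover
      exact (hMU m (mem_singleton_self m)).ne hcover
    obtain ⟨k, hk⟩ := hModd
    omega
  have hMne : ∀ m ∈ M, m.Nonempty := fun m hm =>
    (card_pos.1 (hodd m (hMK hm)).pos).mono inter_subset_left
  have hUc : Uᶜ.Nonempty := by
    rwa [nonempty_iff_ne_empty, Ne, compl_eq_empty_iff]
  have hpart := hxP.card_le hMne hdisj (hcover ▸ hUc)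
  rw [hcover] at hpart
  have hsum : ∑ m ∈ M, xCut G x m < #M * (3 / 2) := by
    simpa using sum_lt_sum_of_nonempty (card_pos.1 (by omega)) fun m hm => hnarrow m (hMK hm)
  have : (3 : ℝ) ≤ #M := by exact_mod_cast hM3
  linarith [hnarrow U hU]

theorem IsLaminar.card_le_sum_cutEdges {x : Sym2 V → ℝ} (hx : ∀ e ∈ G.edgeSet, 0 ≤ x e)
    (hxP : PartitionIneq G x) {T : Finset V} {K : Finset (Finset V)} (hK : IsLaminar K)
    (hodd : ∀ S ∈ K, Odd #(S ∩ T)) (hnarrow : ∀ S ∈ K, xCut G x S < 3 / 2) {t : V}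
    (ht : ∀ S ∈ K, t ∉ S) : (#K : ℝ) ≤ ∑ e ∈ K.biUnion (cutEdges G), x e := by
  have hreg : ∀ U ∈ K, (region K U).Nonempty := fun U hU =>
    hK.region_nonempty hxP hodd hnarrow hU fun h => ht U hU (h ▸ mem_univ t)
  have hinj : Set.InjOn (region K) K := fun U hU W hW h => by
    by_contra hne
    have := hK.disjoint_region hU hW hne
    rw [← h, disjoint_self, bot_eq_empty] at this
    exact (hreg U hU).ne_empty this
  set Q := K.image (region K)
  have hQdisj : (Q : Set (Finset V)).PairwiseDisjoint id := by
    rw [coe_image, hinj.pairwiseDisjoint_image]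
    exact fun U hU W hW hne => hK.disjoint_region hU hW hne
  have htQ : t ∈ (Q.biUnion id)ᶜ := mem_compl.2 fun h => by
    obtain ⟨_, hq, htq⟩ := mem_biUnion.1 h
    obtain ⟨U, hU, rfl⟩ := mem_image.1 hq
    exact ht U hU (region_subset htq)
  have hcard := hxP.card_le (forall_mem_image.2 hreg) hQdisj ⟨t, htQ⟩
  rw [card_image_of_injOn hinj] at hcard
  have hQN : ∀ q ∈ Q, cutEdges G q ⊆ K.biUnion (cutEdges G) :=
    forall_mem_image.2 fun U hU => cutEdges_region_subset hU
  have hN : ∀ p ∈ insert (Q.biUnion id)ᶜ Q, cutEdges G p ⊆ K.biUnion (cutEdges G) := by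
    rw [forall_mem_insert, cutEdges_compl]
    exact ⟨(cutEdges_biUnion_subset Q).trans (biUnion_subset.2 hQN), hQN⟩
  have hxN : ∀ e ∈ K.biUnion (cutEdges G), 0 ≤ x e := fun e he => by
    obtain ⟨_, _, he⟩ := mem_biUnion.1 he
    exact hx e (cutEdges_subset_edgeSet he)
  have hsum := sum_xCut_le_two_mul_sum (pairwiseDisjoint_insert_compl_biUnion hQdisj) hN hxN
  rw [sum_insert (compl_biUnion_notMem ⟨t, htQ⟩), xCut_compl] at hsum
  linarith

end Cut

theorem stmt10_general {V : Type*} [Fintype V] [DecidableEq V]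
    (G : SimpleGraph V)
    (T : Finset V)
    (that : V)
    (x : Sym2 V → ℝ) (hx0 : ∀ e ∈ G.edgeSet, 0 ≤ x e)
    (heven : ∀ S : Finset V, S.Nonempty → S ≠ univ → Even ((S ∩ T).card) →
      2 ≤ xCut G x S)
    -- the partition inequality, satisfied by fractional spanning trees
    (hpart : ∀ P : Finset (Finset V), (∀ p ∈ P, p.Nonempty) →
      (P : Set (Finset V)).PairwiseDisjoint id → P.biUnion id = univ →
      (P.card : ℝ) - 1 ≤ (∑ p ∈ P, xCut G x p) / 2)
    (τ : ℝ) (hτ : τ ≤ 1 / 2) :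
    -- L is the family of all T-odd τ-narrow subsets of V \ {t̂}
    let L : Finset (Finset V) := (univ : Finset (Finset V)).filter
      (fun S => S ⊆ univ.erase that ∧ Odd ((S ∩ T).card) ∧ xCut G x S < 1 + τ)
    ∃ f : Finset V → Sym2 V → ℝ,
      (∀ U ∈ L, ∀ e, 0 ≤ f U e) ∧
      (∀ e ∈ G.edgeSet, ∑ U ∈ L, f U e ≤ x e) ∧
      (∀ U ∈ L, 1 ≤ xCut G (f U) U) := by
  intro L
  have hmem : ∀ S ∈ L, that ∉ S ∧ Odd #(S ∩ T) ∧ xCut G x S < 3 / 2 := fun S hS => by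
    obtain ⟨hsub, hodd, hnarrow⟩ := (mem_filter.1 hS).2
    exact ⟨fun h => by simpa using hsub h, hodd, by linarith⟩
  have hL : IsLaminar L := fun U hU W hW =>
    disjoint_or_subset_or_subset_of_odd hx0 heven (hmem U hU).1 (hmem W hW).1 (hmem U hU).2.1
      (hmem W hW).2.1 (by linarith [(hmem U hU).2.2, (hmem W hW).2.2])
  obtain ⟨f, hf, hfU⟩ := exists_fracAssignment (L := L) (D := cutEdges G)
    (x := fun e => max (x e) 0) (fun e => le_max_right _ _) fun K hK =>
      ((hL.subset hK).card_le_sum_cutEdges hx0 hpart (fun S hS => (hmem S (hK hS)).2.1)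
        (fun S hS => (hmem S (hK hS)).2.2) fun S hS => (hmem S (hK hS)).1).trans
      (sum_le_sum fun e _ => le_max_left _ _)
  refine ⟨f, fun U _ => hf.nonneg U, fun e he => (hf.load_le e).trans (max_eq_left (hx0 e he)).le,
    fun U hU => ?_⟩
  rw [xCut_eq_sum_cutEdges]
  exact hfU U hU

theorem stmt10 {V : Type*} [Fintype V] [DecidableEq V]
    (G : SimpleGraph V)
    (T : Finset V) (hTeven : Even T.card)
    (that : V) (hthat : that ∈ T)
    (x : Sym2 V → ℝ) (hx0 : ∀ e ∈ G.edgeSet, 0 ≤ x e)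
    (heven : ∀ S : Finset V, S.Nonempty → S ≠ univ → Even ((S ∩ T).card) →
      2 ≤ xCut G x S)
    -- the partition inequality, satisfied by fractional spanning trees
    (hpart : ∀ P : Finset (Finset V), (∀ p ∈ P, p.Nonempty) →
      (P : Set (Finset V)).PairwiseDisjoint id → P.biUnion id = univ →
      (P.card : ℝ) - 1 ≤ (∑ p ∈ P, xCut G x p) / 2)
    (τ : ℝ) (hτ0 : 0 ≤ τ) (hτ : τ ≤ 1 / 2) :
    -- L is the family of all T-odd τ-narrow subsets of V \ {t̂}
    let L : Finset (Finset V) := (univ : Finset (Finset V)).filter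
      (fun S => S ⊆ univ.erase that ∧ Odd ((S ∩ T).card) ∧ xCut G x S < 1 + τ)
    ∃ f : Finset V → Sym2 V → ℝ,
      (∀ U ∈ L, ∀ e, 0 ≤ f U e) ∧
      (∀ e ∈ G.edgeSet, ∑ U ∈ L, f U e ≤ x e) ∧
      (∀ U ∈ L, 1 ≤ xCut G (f U) U) :=
  stmt10_general G T that x hx0 heven hpart τ hτ
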